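/- arXiv:1607.07313 — 2 statements merged into one kernel-verified Lean document; each statement's English description precedes it below -/
import Mathlib

section
/- Let D be a (super) edge-magic digraph with a (super) edge-magic labeling f, let h : E(D) → S_p^k be any function, and let f̂ be the induced (super) edge-magic labeling of D ⊗_h S_p^k defined by f̂(a,i) = p(f(a) − 1) + i on vertices and f̂((a,i),(b,j)) = p(f((a,b)) − 1) + (k + p) − (i + j) on arcs. Then val(f̂) = p(val(f) − 3) + k + p. -/
open Finset

/-- `(fv, fa)` is an edge-magic labeling with valence `k` of the digraph with vertex set
`Vs` and arc set `A` (i.e. of its underlying graph): the labels form a bijection from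
`V ∪ E` onto `[1, |V| + |E|]` and every arc `(u,v)` satisfies `fv u + fa (u,v) + fv v = k`. -/
def DIsEdgeMagic {β : Type*} [DecidableEq β] (Vs : Finset β) (A : Finset (β × β))
    (fv : β → ℤ) (fa : β × β → ℤ) (k : ℤ) : Prop :=
  Vs.image fv ∪ A.image fa = Finset.Icc 1 ((Vs.card : ℤ) + (A.card : ℤ)) ∧
  ∀ a ∈ A, fv a.1 + fa a + fv a.2 = k

/-- A super edge-magic labeling of a digraph: edge-magic and the vertex labels are
exactly `[1, |V|]`. -/
def DIsSuperEdgeMagic {β : Type*} [DecidableEq β] (Vs : Finset β) (A : Finset (β × β))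
    (fv : β → ℤ) (fa : β × β → ℤ) (k : ℤ) : Prop :=
  DIsEdgeMagic Vs A fv fa k ∧ Vs.image fv = Finset.Icc 1 (Vs.card : ℤ)

/-- Membership in the family `S_p^k`: a digraph on the vertex set `[1,p] ⊆ ℤ`
(vertices named after their labels), with exactly `p` arcs, whose induced edge sums
are exactly `{k, k+1, …, k+p-1}`. -/
def memSpk (p : ℕ) (k : ℤ) (F : Finset (ℤ × ℤ)) : Prop :=
  (∀ a ∈ F, a.1 ∈ Finset.Icc (1 : ℤ) (p : ℤ) ∧ a.2 ∈ Finset.Icc (1 : ℤ) (p : ℤ)) ∧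
  F.card = p ∧
  F.image (fun a => a.1 + a.2) = Finset.Icc k (k + (p : ℤ) - 1)

/-- The arc set of the product `D ⊗_h Γ`, where `D` has arc set `A` and `h` assigns to
each arc of `D` a digraph on a vertex set contained in `ℤ`:
`((a,i),(b,j))` is an arc iff `(a,b) ∈ A` and `(i,j) ∈ h (a,b)`. -/
def prodArcs {α : Type*} [DecidableEq α] (A : Finset (α × α))
    (h : α × α → Finset (ℤ × ℤ)) : Finset ((α × ℤ) × (α × ℤ)) :=
  A.biUnion fun ab => (h ab).image fun ij => ((ab.1, ij.1), (ab.2, ij.2))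

/-- Isomorphism of digraphs given by vertex sets and arc sets. -/
def DigraphIso {β γ : Type*} [DecidableEq β] [DecidableEq γ]
    (V1 : Finset β) (A1 : Finset (β × β)) (V2 : Finset γ) (A2 : Finset (γ × γ)) : Prop :=
  ∃ φ : β → γ, Set.InjOn φ ↑V1 ∧ V1.image φ = V2 ∧ A1.image (Prod.map φ φ) = A2

/-- Isomorphism of labeled digraphs: a digraph isomorphism preserving all vertex and
arc labels. -/
def LabeledDigraphIso {β γ : Type*} [DecidableEq β] [DecidableEq γ]
    (V1 : Finset β) (A1 : Finset (β × β)) (fv1 : β → ℤ) (fa1 : β × β → ℤ)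
    (V2 : Finset γ) (A2 : Finset (γ × γ)) (fv2 : γ → ℤ) (fa2 : γ × γ → ℤ) : Prop :=
  ∃ φ : β → γ, Set.InjOn φ ↑V1 ∧ V1.image φ = V2 ∧
    A1.image (Prod.map φ φ) = A2 ∧
    (∀ x ∈ V1, fv2 (φ x) = fv1 x) ∧
    (∀ a ∈ A1, fa2 (φ a.1, φ a.2) = fa1 a)

/-- The vertex labels of the labeling of `D ⊗_h S_p^k` induced by a labeling `gv` of the
vertices of `D`: the vertex `(a,i)` receives `p(gv a - 1) + i`. -/
def inducedVert {α : Type*} (p : ℕ) (gv : α → ℤ) : α × ℤ → ℤ :=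
  fun x => (p : ℤ) * (gv x.1 - 1) + x.2

/-- The arc labels of the labeling of `D ⊗_h S_p^k` induced by an arc labeling `ga` of
`D`: the arc `((a,i),(b,j))` receives `p(ga (a,b) - 1) + (k + p) - (i + j)`. -/
def inducedArc {α : Type*} (p : ℕ) (k : ℤ) (ga : α × α → ℤ) :
    (α × ℤ) × (α × ℤ) → ℤ :=
  fun x => (p : ℤ) * (ga (x.1.1, x.2.1) - 1) + (k + (p : ℤ)) - (x.1.2 + x.2.2)

/-! The labels of `D` are blown up by the factor `p`: the vertex `(a,i)` and every arc of
`D ⊗_h S_p^k` lying over the arc `(a,b)` get their labels in the block `p(m-1)+1, …, pm`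
(`labelBlock p m`), where `m` is the label of `a` resp. `(a,b)`. The `p` vertices over `a`
fill their block, and since the arc sums of a member of `S_p^k` run through `k, …, k+p-1`, so do
the `p` arcs over `(a,b)`. The blocks of `1, …, n` tile `1, …, pn`, and the magic sum of `f` at
`(a,b)` scales to that of `f̂` at each arc over it. -/

namespace Finset

lemma image_const_sub_Icc {α : Type*} [AddCommGroup α] [PartialOrder α] [IsOrderedAddMonoid α]
    [LocallyFiniteOrder α] [DecidableEq α] (a b c : α) :
    (Icc a b).image (c - ·) = Icc (c - b) (c - a) := by
  rw [← coe_inj, coe_image, coe_Icc, Set.image_const_sub_Icc, coe_Icc]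

end Finset

noncomputable def labelBlock (p : ℕ) (m : ℤ) : Finset ℤ :=
  Icc ((p : ℤ) * (m - 1) + 1) ((p : ℤ) * m)

lemma biUnion_labelBlock_Icc (p : ℕ) (n : ℤ) :
    (Icc 1 n).biUnion (labelBlock p) = Icc 1 ((p : ℤ) * n) := by
  ext x
  simp only [labelBlock, mem_biUnion, mem_Icc]
  constructor
  · rintro ⟨m, ⟨hm1, hmn⟩, hx1, hxm⟩
    have : (p : ℤ) * m ≤ p * n := mul_le_mul_of_nonneg_left hmn (by positivity)
    constructor <;> nlinarith
  · rintro ⟨hx1, hxn⟩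
    obtain rfl | hp := p.eq_zero_or_pos
    · simp only [Nat.cast_zero, zero_mul] at hxn
      omega
    replace hp : (0 : ℤ) < p := by exact_mod_cast hp
    -- `x` lies in the block of `(x - 1) / p + 1`
    have hdiv := Int.mul_ediv_add_emod (x - 1) p
    have hrem0 := Int.emod_nonneg (x - 1) hp.ne'
    have hremp := Int.emod_lt_of_pos (x - 1) hp
    have hq0 : 0 ≤ (x - 1) / p := Int.ediv_nonneg (by linarith) hp.le
    have hqn : (x - 1) / p < n := lt_of_mul_lt_mul_left (by linarith) hp.le
    exact ⟨(x - 1) / p + 1, ⟨by linarith, by linarith⟩, by linarith, by linarith⟩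

section InducedLabeling

variable {α : Type*} [DecidableEq α] (p : ℕ)

lemma image_inducedVert (Vs : Finset α) (fv : α → ℤ) :
    (Vs ×ˢ Icc (1 : ℤ) p).image (inducedVert p fv) = (Vs.image fv).biUnion (labelBlock p) := by
  rw [product_eq_biUnion, biUnion_image, image_biUnion]
  refine biUnion_congr rfl fun a _ => ?_
  have : inducedVert p fv ∘ (fun i => (a, i)) = ((p : ℤ) * (fv a - 1) + ·) := rfl
  rw [image_image, this, image_add_left_Icc, labelBlock]
  congr 1
  ring

lemma image_inducedArc (k : ℤ) (A : Finset (α × α)) (h : α × α → Finset (ℤ × ℤ))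
    (fa : α × α → ℤ) (hsums : ∀ a ∈ A, (h a).image (fun a => a.1 + a.2) = Icc k (k + p - 1)) :
    (prodArcs A h).image (inducedArc p k fa) = (A.image fa).biUnion (labelBlock p) := by
  rw [prodArcs, biUnion_image, image_biUnion]
  refine biUnion_congr rfl fun ab hab => ?_
  have : inducedArc p k fa ∘ (fun ij : ℤ × ℤ => ((ab.1, ij.1), (ab.2, ij.2))) =
      (((p : ℤ) * (fa ab - 1) + (k + p)) - ·) ∘ fun ij => ij.1 + ij.2 := rfl
  rw [image_image, this, ← image_image, hsums ab hab, image_const_sub_Icc, labelBlock]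
  congr 1 <;> ring

lemma card_prodArcs (n : ℕ) (A : Finset (α × α)) (h : α × α → Finset (ℤ × ℤ))
    (hcard : ∀ a ∈ A, (h a).card = n) : (prodArcs A h).card = A.card * n := by
  rw [prodArcs, card_biUnion, sum_congr rfl fun ab hab => ?_, sum_const, smul_eq_mul]
  · rw [card_image_of_injective _ fun ij ij' hij => by simpa [Prod.ext_iff] using hij,
      hcard ab hab]
  · intro ab _ ab' _ hne
    simp only [Function.onFun, disjoint_left, mem_image]
    rintro _ ⟨ij, -, rfl⟩ ⟨ij', -, hij'⟩
    exact hne (Prod.ext (congrArg (·.1.1) hij').symm (congrArg (·.2.1) hij').symm)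

omit [DecidableEq α] in
lemma card_product_Icc_one (Vs : Finset α) :
    ((Vs ×ˢ Icc (1 : ℤ) p).card : ℤ) = Vs.card * p := by
  simp [card_product]

lemma DIsEdgeMagic.induced {Vs : Finset α} {A : Finset (α × α)} {fv : α → ℤ}
    {fa : α × α → ℤ} {κ : ℤ} (hf : DIsEdgeMagic Vs A fv fa κ) (k : ℤ) (h : α × α → Finset (ℤ × ℤ))
    (hh : ∀ a ∈ A, memSpk p k (h a)) :
    DIsEdgeMagic (Vs ×ˢ Icc (1 : ℤ) p) (prodArcs A h) (inducedVert p fv) (inducedArc p k fa)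
      ((p : ℤ) * (κ - 3) + k + p) := by
  refine ⟨?_, fun y hy => ?_⟩
  · rw [image_inducedVert, image_inducedArc p k A h fa fun a ha => (hh a ha).2.2, ← union_biUnion,
      hf.1, biUnion_labelBlock_Icc, card_product_Icc_one,
      card_prodArcs p A h fun a ha => (hh a ha).2.1]
    congr 1
    push_cast
    ring
  · simp only [prodArcs, mem_biUnion, mem_image] at hy
    obtain ⟨ab, hab, ij, -, rfl⟩ := hy
    simp only [inducedVert, inducedArc]
    linear_combination (p : ℤ) * hf.2 ab hab

lemma DIsSuperEdgeMagic.induced {Vs : Finset α} {A : Finset (α × α)} {fv : α → ℤ}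
    {fa : α × α → ℤ} {κ : ℤ} (hf : DIsSuperEdgeMagic Vs A fv fa κ) (k : ℤ)
    (h : α × α → Finset (ℤ × ℤ)) (hh : ∀ a ∈ A, memSpk p k (h a)) :
    DIsSuperEdgeMagic (Vs ×ˢ Icc (1 : ℤ) p) (prodArcs A h) (inducedVert p fv) (inducedArc p k fa)
      ((p : ℤ) * (κ - 3) + k + p) := by
  refine ⟨hf.1.induced p k h hh, ?_⟩
  rw [image_inducedVert, hf.2, biUnion_labelBlock_Icc, card_product_Icc_one, mul_comm]

end InducedLabeling

theorem stmt6_general {α : Type*} [DecidableEq α] (Vs : Finset α) (A : Finset (α × α))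
    (p : ℕ) (k : ℤ) (h : α × α → Finset (ℤ × ℤ))
    (hh : ∀ a ∈ A, memSpk p k (h a))
    (fv : α → ℤ) (fa : α × α → ℤ) (κ : ℤ)
    (hf : DIsEdgeMagic Vs A fv fa κ) :
    DIsEdgeMagic (Vs ×ˢ Finset.Icc (1 : ℤ) (p : ℤ)) (prodArcs A h)
      (inducedVert p fv) (inducedArc p k fa)
      ((p : ℤ) * (κ - 3) + k + (p : ℤ)) ∧
    (DIsSuperEdgeMagic Vs A fv fa κ →
      DIsSuperEdgeMagic (Vs ×ˢ Finset.Icc (1 : ℤ) (p : ℤ)) (prodArcs A h)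
        (inducedVert p fv) (inducedArc p k fa)
        ((p : ℤ) * (κ - 3) + k + (p : ℤ))) :=
  ⟨hf.induced p k h hh, fun hs => hs.induced p k h hh⟩

/-- The labeling of `D ⊗_h S_p^k` induced by a (super) edge-magic labeling `f` of `D`
is (super) edge-magic with valence `p(val(f) - 3) + k + p`. -/
theorem stmt6 {α : Type*} [DecidableEq α] (Vs : Finset α) (A : Finset (α × α))
    (hA : ∀ a ∈ A, a.1 ∈ Vs ∧ a.2 ∈ Vs)
    (p : ℕ) (k : ℤ) (h : α × α → Finset (ℤ × ℤ))
    (hh : ∀ a ∈ A, memSpk p k (h a))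
    (fv : α → ℤ) (fa : α × α → ℤ) (κ : ℤ)
    (hf : DIsEdgeMagic Vs A fv fa κ) :
    DIsEdgeMagic (Vs ×ˢ Finset.Icc (1 : ℤ) (p : ℤ)) (prodArcs A h)
      (inducedVert p fv) (inducedArc p k fa)
      ((p : ℤ) * (κ - 3) + k + (p : ℤ)) ∧
    (DIsSuperEdgeMagic Vs A fv fa κ →
      DIsSuperEdgeMagic (Vs ×ˢ Finset.Icc (1 : ℤ) (p : ℤ)) (prodArcs A h)
        (inducedVert p fv) (inducedArc p k fa)
        ((p : ℤ) * (κ - 3) + k + (p : ℤ))) :=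
  stmt6_general Vs A p k h hh fv fa κ hf
end

section
/- Let n ≥ 3 be an odd integer and let m ≥ 3 be an integer such that either m is odd or m ≥ n. Then there exists a function h : E(C⃗_m) → {C⃗_n, C⃖_n} such that C⃗_m ⊗_h {C⃗_n, C⃖_n} ≅ C⃗_{mn}. -/
open Finset

/-- The arc set of the strongly oriented cycle `C⃗_n` on the vertex set `[1,n] ⊆ ℤ`:
arcs `i → i+1` (and `n → 1`). -/
noncomputable def forwardCycle (n : ℕ) : Finset (ℤ × ℤ) :=
  (Finset.Icc (1 : ℤ) (n : ℤ)).image fun i => (i, if i = (n : ℤ) then 1 else i + 1)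

/-- The arc set of the reverse strong orientation `C⃖_n` of the cycle `C_n` on the
vertex set `[1,n] ⊆ ℤ`. -/
noncomputable def backwardCycle (n : ℕ) : Finset (ℤ × ℤ) :=
  (Finset.Icc (1 : ℤ) (n : ℤ)).image fun i => (if i = (n : ℤ) then 1 else i + 1, i)

/-- The arc set of the disjoint union of `c` copies of the strongly oriented cycle
`C⃗_L`, on the vertex set `[1,c] × [1,L] ⊆ ℤ × ℤ`. -/
noncomputable def unionCycles (c L : ℕ) : Finset ((ℤ × ℤ) × (ℤ × ℤ)) :=
  ((Finset.Icc (1 : ℤ) (c : ℤ)) ×ˢ (Finset.Icc (1 : ℤ) (L : ℤ))).image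
    fun x => (x, (x.1, if x.2 = (L : ℤ) then 1 else x.2 + 1))

/-!
Put `C⃗_n` on the arcs leaving the first `k` columns of `C⃗_m` and `C⃖_n` on the others. A walk
once around `C⃗_m` then moves `k` rows forward and `m - k` rows back, a net shift of `2k - m`.
When this shift is invertible modulo `n`, the walk from `(1, 1)` visits all `mn` vertices before
it closes up, so the product is the single cycle `C⃗_{mn}`. For odd `m` take `k = (m + 1) / 2`
(shift `1`); for even `m ≥ n` take `k = (m + n - 1) / 2` (shift `n - 1`).
-/

lemma mem_forwardCycle {N : ℕ} {x y : ℤ} :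
    (x, y) ∈ forwardCycle N ↔ x ∈ Icc 1 (N : ℤ) ∧ y = if x = N then 1 else x + 1 := by
  simp only [forwardCycle, mem_image, Prod.mk.injEq]
  constructor
  · rintro ⟨i, hi, rfl, rfl⟩
    exact ⟨hi, rfl⟩
  · rintro ⟨hx, rfl⟩
    exact ⟨x, hx, rfl, rfl⟩

lemma mem_backwardCycle {N : ℕ} {x y : ℤ} :
    (x, y) ∈ backwardCycle N ↔ (y, x) ∈ forwardCycle N := by
  simp only [backwardCycle, forwardCycle, mem_image, Prod.mk.injEq, and_comm]

lemma mem_Icc_of_mem_forwardCycle {N : ℕ} {x y : ℤ} (h : (x, y) ∈ forwardCycle N) :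
    x ∈ Icc 1 (N : ℤ) ∧ y ∈ Icc 1 (N : ℤ) := by
  obtain ⟨hx, rfl⟩ := mem_forwardCycle.1 h
  refine ⟨hx, ?_⟩
  rw [mem_Icc] at hx ⊢
  split_ifs <;> omega

lemma modEq_of_mem_forwardCycle {N : ℕ} {x y : ℤ} (h : (x, y) ∈ forwardCycle N) :
    y ≡ x + 1 [ZMOD N] := by
  obtain ⟨-, rfl⟩ := mem_forwardCycle.1 h
  split_ifs with hx
  · rw [hx]
    exact Int.modEq_iff_dvd.2 ⟨1, by ring⟩
  · rfl

lemma card_forwardCycle (N : ℕ) : #(forwardCycle N) = N := by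
  rw [forwardCycle, card_image_of_injective _ fun _ _ h => congrArg Prod.fst h]
  simp

lemma card_backwardCycle (N : ℕ) : #(backwardCycle N) = N := by
  rw [backwardCycle, card_image_of_injective _ fun _ _ h => congrArg Prod.snd h]
  simp

lemma mem_prodArcs {α : Type*} [DecidableEq α] {A : Finset (α × α)} {h : α × α → Finset (ℤ × ℤ)}
    {a b : α} {i j : ℤ} : ((a, i), (b, j)) ∈ prodArcs A h ↔ (a, b) ∈ A ∧ (i, j) ∈ h (a, b) := by
  simp [prodArcs]

lemma card_prodArcs_s16 {α : Type*} [DecidableEq α] (A : Finset (α × α))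
    (h : α × α → Finset (ℤ × ℤ)) {c : ℕ} (hc : ∀ ab ∈ A, #(h ab) = c) :
    #(prodArcs A h) = #A * c := by
  rw [prodArcs, card_biUnion]
  · rw [sum_congr rfl fun ab hab => ?_, sum_const, smul_eq_mul]
    rw [card_image_of_injective, hc ab hab]
    intro ij ij' e
    simp only [Prod.mk.injEq] at e
    exact Prod.ext e.1.2 e.2.2
  · intro ab _ ab' _ hne
    simp only [Function.onFun, disjoint_left, mem_image, not_exists, not_and]
    rintro _ ⟨ij, -, rfl⟩ ij' - e
    simp only [Prod.mk.injEq] at e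
    exact hne (Prod.ext e.1.1.symm e.2.1.symm)

lemma digraphIso_of_injOn {β γ : Type*} [DecidableEq β] [DecidableEq γ]
    {V₁ : Finset β} {A₁ : Finset (β × β)} {V₂ : Finset γ} {A₂ : Finset (γ × γ)} (φ : β → γ)
    (hφ : Set.InjOn φ V₁) (hA₁ : ∀ e ∈ A₁, e.1 ∈ V₁ ∧ e.2 ∈ V₁)
    (hV : ∀ v ∈ V₁, φ v ∈ V₂) (hA : ∀ e ∈ A₁, Prod.map φ φ e ∈ A₂)
    (hcardV : #V₂ ≤ #V₁) (hcardA : #A₂ ≤ #A₁) : DigraphIso V₁ A₁ V₂ A₂ := by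
  have hφA : Set.InjOn (Prod.map φ φ) A₁ := fun e he e' he' h =>
    Prod.ext (hφ (hA₁ e he).1 (hA₁ e' he').1 (congrArg Prod.fst h))
      (hφ (hA₁ e he).2 (hA₁ e' he').2 (congrArg Prod.snd h))
  refine ⟨φ, hφ, ?_, ?_⟩
  · refine eq_of_subset_of_card_le (image_subset_iff.2 hV) ?_
    rwa [card_image_of_injOn hφ]
  · refine eq_of_subset_of_card_le (image_subset_iff.2 hA) ?_
    rwa [card_image_of_injOn hφA]

lemma Int.eq_of_modEq_of_abs_sub_lt {n x y : ℤ} (h : x ≡ y [ZMOD n]) (hxy : |y - x| < n) :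
    x = y := by
  have := Int.eq_zero_of_abs_lt_dvd h.dvd hxy
  omega

lemma Int.ModEq.cancel_right_of_mul_modEq_one {n a b s t : ℤ} (h : a * t ≡ b * t [ZMOD n])
    (hst : s * t ≡ 1 [ZMOD n]) : a ≡ b [ZMOD n] :=
  calc a = a * 1 := (mul_one a).symm
    _ ≡ a * (s * t) [ZMOD n] := hst.symm.mul_left a
    _ = a * t * s := by ring
    _ ≡ b * t * s [ZMOD n] := h.mul_right s
    _ = b * (s * t) := by ring
    _ ≡ b * 1 [ZMOD n] := hst.mul_left b
    _ = b := mul_one b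

lemma Int.emod_mem_Ico {n : ℤ} (hn : 0 < n) (x : ℤ) : x % n ∈ Ico 0 n :=
  mem_Ico.2 ⟨Int.emod_nonneg x hn.ne', Int.emod_lt_of_pos x hn⟩

lemma add_mul_mem_Icc {m n : ℕ} {a q : ℤ} (ha : a ∈ Icc 1 (m : ℤ)) (hq : q ∈ Ico 0 (n : ℤ)) :
    a + m * q ∈ Icc 1 ((m * n : ℕ) : ℤ) := by
  rw [mem_Icc] at ha ⊢
  rw [mem_Ico] at hq
  push_cast
  constructor <;> nlinarith

/-- Incrementing the mixed-radix number `a + m q`: the lap digit `q` carries exactly when the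
column digit `a` wraps around. -/
lemma add_mul_mem_forwardCycle {m n : ℕ} {a b q q' : ℤ} (hab : (a, b) ∈ forwardCycle m)
    (hq : q ∈ Ico 0 (n : ℤ)) (hq' : q' ∈ Ico 0 (n : ℤ))
    (hcarry : q' ≡ q + if a = m then 1 else 0 [ZMOD n]) :
    (a + m * q, b + m * q') ∈ forwardCycle (m * n) := by
  obtain ⟨ha, rfl⟩ := mem_forwardCycle.1 hab
  rw [mem_Icc] at ha
  rw [mem_Ico] at hq hq'
  have hq'_eq : q' = (q + if a = m then 1 else 0) % n := by
    rw [← hcarry]; exact (Int.emod_eq_of_lt hq'.1 hq'.2).symm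
  refine mem_forwardCycle.2 ⟨add_mul_mem_Icc (mem_Icc.2 ha) (mem_Ico.2 hq), ?_⟩
  push_cast
  by_cases ham : a = m
  · subst ham
    simp only [↓reduceIte] at hq'_eq ⊢
    by_cases hqn : q = n - 1
    · rw [if_pos (by rw [hqn]; ring), hq'_eq, hqn, sub_add_cancel, Int.emod_self]
      ring
    · have hq2 : (m : ℤ) * q ≤ m * (n - 2) := mul_le_mul_of_nonneg_left (by omega) (by omega)
      rw [if_neg (by nlinarith), hq'_eq, Int.emod_eq_of_lt (by omega) (by omega)]
      ring
  · simp only [ham, ↓reduceIte, add_zero] at hq'_eq ⊢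
    have hmq : (m : ℤ) * q ≤ m * n - m := by nlinarith
    rw [if_neg (by omega), hq'_eq, Int.emod_eq_of_lt hq.1 hq.2]
    ring

noncomputable def switchAt (n : ℕ) (k : ℤ) (ab : ℤ × ℤ) : Finset (ℤ × ℤ) :=
  if ab.1 ≤ k then forwardCycle n else backwardCycle n

lemma card_switchAt (n : ℕ) (k : ℤ) (ab : ℤ × ℤ) : #(switchAt n k ab) = n := by
  unfold switchAt
  split_ifs
  exacts [card_forwardCycle n, card_backwardCycle n]

lemma mem_Icc_of_mem_switchAt {n : ℕ} {k : ℤ} {ab : ℤ × ℤ} {i j : ℤ}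
    (h : (i, j) ∈ switchAt n k ab) : i ∈ Icc 1 (n : ℤ) ∧ j ∈ Icc 1 (n : ℤ) := by
  unfold switchAt at h
  split_ifs at h
  · exact mem_Icc_of_mem_forwardCycle h
  · exact (mem_Icc_of_mem_forwardCycle (mem_backwardCycle.1 h)).symm

/-- The net vertical displacement of a walk in the product from column `1` to column `a`. -/
def netShift (k a : ℤ) : ℤ := 2 * min (a - 1) k - (a - 1)

lemma netShift_add_one (k a : ℤ) :
    netShift k (a + 1) = netShift k a + if a ≤ k then 1 else -1 := by
  unfold netShift
  split_ifs <;> omega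

def rowOffset (k : ℤ) (p : ℤ × ℤ) : ℤ := p.2 - 1 - netShift k p.1

lemma rowOffset_modEq_of_mem_switchAt {n : ℕ} {k a b i j : ℤ}
    (h : (i, j) ∈ switchAt n k (a, b)) :
    rowOffset k (a + 1, j) ≡ rowOffset k (a, i) [ZMOD n] := by
  unfold rowOffset switchAt at *
  rw [netShift_add_one]
  split_ifs at h ⊢
  · convert (modEq_of_mem_forwardCycle h).sub_right (netShift k a + 2) using 1 <;> ring
  · convert ((modEq_of_mem_forwardCycle (mem_backwardCycle.1 h)).sub_right
      (netShift k a + 1)).symm using 1 <;> ring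

lemma rowOffset_one {m : ℕ} {k : ℤ} (hk0 : 0 ≤ k) (hkm : k ≤ m) (j : ℤ) :
    rowOffset k (1, j) = rowOffset k (m + 1, j) + (2 * k - m) := by
  simp only [rowOffset, netShift]
  omega

/-- The position of `p` on the single cycle: with `t` inverse to `2k - m` modulo `n`,
`p` is reached from `(1, 1)` after `rowOffset k p * t % n` full laps around `C⃗_m`. -/
def cycleLabel (m n k t : ℤ) (p : ℤ × ℤ) : ℤ := p.1 + m * (rowOffset k p * t % n)

section

variable {m n : ℕ} {k t : ℤ}

lemma cycleLabel_injOn (hst : (2 * k - m) * t ≡ 1 [ZMOD n]) :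
    Set.InjOn (cycleLabel m n k t) (Icc 1 (m : ℤ) ×ˢ Icc 1 (n : ℤ) : Finset (ℤ × ℤ)) := by
  rintro ⟨a, i⟩ hp ⟨b, j⟩ hq heq
  simp only [coe_product, Set.mem_prod, mem_coe, mem_Icc] at hp hq
  simp only [cycleLabel] at heq
  have hab : a = b := by
    refine Int.eq_of_modEq_of_abs_sub_lt (n := m) ?_ (abs_sub_lt_iff.2 ⟨by omega, by omega⟩)
    simpa [Int.ModEq, Int.add_mul_emod_self_left] using congrArg (· % (m : ℤ)) heq
  subst hab
  have hlap : rowOffset k (a, i) * t ≡ rowOffset k (a, j) * t [ZMOD n] :=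
    mul_left_cancel₀ (by omega) (add_left_cancel heq)
  have hij : i ≡ j [ZMOD n] := by
    refine Int.ModEq.cancel_right_of_mul_modEq_one ?_ hst
    convert hlap.add_right ((1 + netShift k a) * t) using 1 <;> simp only [rowOffset] <;> ring
  rw [Int.eq_of_modEq_of_abs_sub_lt hij (abs_sub_lt_iff.2 ⟨by omega, by omega⟩)]

lemma cycleLabel_mem_forwardCycle (hk0 : 0 ≤ k) (hkm : k ≤ m)
    (hst : (2 * k - m) * t ≡ 1 [ZMOD n]) {a b i j : ℤ}
    (h : ((a, i), (b, j)) ∈ prodArcs (forwardCycle m) (switchAt n k)) :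
    (cycleLabel m n k t (a, i), cycleLabel m n k t (b, j)) ∈ forwardCycle (m * n) := by
  obtain ⟨hab, hij⟩ := mem_prodArcs.1 h
  have hn : (0 : ℤ) < n := by
    have := (mem_Icc_of_mem_switchAt hij).1
    rw [mem_Icc] at this
    omega
  refine add_mul_mem_forwardCycle hab (Int.emod_mem_Ico hn _) (Int.emod_mem_Ico hn _) ?_
  refine (Int.mod_modEq _ _).trans (Int.ModEq.trans ?_ ((Int.mod_modEq _ _).add_right _).symm)
  have hrow := (rowOffset_modEq_of_mem_switchAt hij).mul_right t
  obtain ⟨-, rfl⟩ := mem_forwardCycle.1 hab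
  split_ifs with ham
  · subst ham
    calc rowOffset k (1, j) * t = rowOffset k (m + 1, j) * t + (2 * k - m) * t := by
          rw [rowOffset_one hk0 hkm]; ring
      _ ≡ rowOffset k (m, i) * t + 1 [ZMOD n] := hrow.add hst
  · rwa [add_zero]

lemma cycleLabel_mem_Icc {a i : ℤ} (hn : (0 : ℤ) < n) (ha : a ∈ Icc 1 (m : ℤ)) :
    cycleLabel m n k t (a, i) ∈ Icc 1 ((m * n : ℕ) : ℤ) :=
  add_mul_mem_Icc ha (Int.emod_mem_Ico hn _)

theorem digraphIso_prodArcs_switchAt (hk0 : 0 ≤ k) (hkm : k ≤ m)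
    (hcop : IsCoprime (2 * k - m) n) :
    DigraphIso (Icc 1 (m : ℤ) ×ˢ Icc 1 (n : ℤ)) (prodArcs (forwardCycle m) (switchAt n k))
      (Icc 1 ((m * n : ℕ) : ℤ)) (forwardCycle (m * n)) := by
  obtain ⟨t, u, htu⟩ := hcop
  have hst : (2 * k - m) * t ≡ 1 [ZMOD n] := Int.modEq_iff_dvd.2 ⟨u, by linear_combination -htu⟩
  refine digraphIso_of_injOn (cycleLabel m n k t) (cycleLabel_injOn hst) ?_ ?_
    (fun e he => cycleLabel_mem_forwardCycle hk0 hkm hst he) ?_ ?_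
  · rintro ⟨⟨a, i⟩, ⟨b, j⟩⟩ he
    obtain ⟨hab, hij⟩ := mem_prodArcs.1 he
    have hab := mem_Icc_of_mem_forwardCycle hab
    have hij := mem_Icc_of_mem_switchAt hij
    exact ⟨mem_product.2 ⟨hab.1, hij.1⟩, mem_product.2 ⟨hab.2, hij.2⟩⟩
  · rintro ⟨a, i⟩ hp
    obtain ⟨ha, hi⟩ := mem_product.1 hp
    exact cycleLabel_mem_Icc (by rw [mem_Icc] at hi; omega) ha
  · simp
  · rw [card_forwardCycle, card_prodArcs_s16 _ _ fun ab _ => card_switchAt n k ab, card_forwardCycle]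

end

theorem stmt16_general (m n : ℕ) (hnodd : Odd n)
    (hcond : Odd m ∨ n ≤ m) :
    ∃ h : ℤ × ℤ → Finset (ℤ × ℤ),
      (∀ a ∈ forwardCycle m, h a = forwardCycle n ∨ h a = backwardCycle n) ∧
      DigraphIso
        (Finset.Icc (1 : ℤ) (m : ℤ) ×ˢ Finset.Icc (1 : ℤ) (n : ℤ))
        (prodArcs (forwardCycle m) h)
        (Finset.Icc (1 : ℤ) ((m * n : ℕ) : ℤ))
        (forwardCycle (m * n)) := by
  suffices ∃ k : ℤ, 0 ≤ k ∧ k ≤ m ∧ IsCoprime (2 * k - m) n by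
    obtain ⟨k, hk0, hkm, hcop⟩ := this
    refine ⟨switchAt n k, fun ab _ => ?_, digraphIso_prodArcs_switchAt hk0 hkm hcop⟩
    unfold switchAt
    split_ifs
    exacts [Or.inl rfl, Or.inr rfl]
  rcases Nat.even_or_odd m with ⟨v, hv⟩ | ⟨r, hr⟩
  · obtain ⟨u, hu⟩ := hnodd
    have hnm : n ≤ m := hcond.resolve_left (Nat.not_odd_iff_even.2 ⟨v, hv⟩)
    exact ⟨v + u, by positivity, by omega, ⟨-1, 1, by push_cast [hv, hu]; ring⟩⟩
  · exact ⟨r + 1, by positivity, by omega, ⟨1, 0, by push_cast [hr]; ring⟩⟩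

/-- Let `n ≥ 3` be odd and let `m ≥ 3` be an integer such that either `m` is odd or
`m ≥ n`. Then there exists `h : E(C⃗_m) → {C⃗_n, C⃖_n}` such that
`C⃗_m ⊗_h {C⃗_n, C⃖_n} ≅ C⃗_{mn}`. -/
theorem stmt16 (m n : ℕ) (hn3 : 3 ≤ n) (hnodd : Odd n) (hm3 : 3 ≤ m)
    (hcond : Odd m ∨ n ≤ m) :
    ∃ h : ℤ × ℤ → Finset (ℤ × ℤ),
      (∀ a ∈ forwardCycle m, h a = forwardCycle n ∨ h a = backwardCycle n) ∧
      DigraphIso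
        (Finset.Icc (1 : ℤ) (m : ℤ) ×ˢ Finset.Icc (1 : ℤ) (n : ℤ))
        (prodArcs (forwardCycle m) h)
        (Finset.Icc (1 : ℤ) ((m * n : ℕ) : ℤ))
        (forwardCycle (m * n)) :=
  stmt16_general m n hnodd hcond
end
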